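/- Suppose p in R<x,x*> has the form p = (s + q_1) q_2 + c, where q_1 and q_2 are antisymmetric (q_i* = -q_i), q_2 is nonzero, s is a nonzero sum of squares, c is a constant, and deg(s + q_1) > 0. Then the left ideal generated by p is not real; indeed q_2* p + p* q_2 = 2 q_2* s q_2 is a nonzero sum of squares in I + I* and deg(q_2) < deg(p). -/

import Mathlib

open scoped BigOperators

noncomputable section

/-- The free real *-algebra on `g` variables `x₁,…,x_g` and their formal adjoints
`x₁*,…,x_g*`, modeled as the monoid algebra of the free monoid on `2g` letters,
where `Sum.inl i` is `xᵢ` and `Sum.inr i` is `xᵢ*`. -/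
abbrev FreeStarAlg (g : ℕ) := MonoidAlgebra ℝ (FreeMonoid (Fin g ⊕ Fin g))

namespace FreeStarAlg

variable {g : ℕ}

/-- The involution on words: reverse the word and star each letter. -/
def starWord (w : FreeMonoid (Fin g ⊕ Fin g)) : FreeMonoid (Fin g ⊕ Fin g) :=
  FreeMonoid.ofList (((FreeMonoid.toList w).map Sum.swap).reverse)

/-- The involution `p ↦ p*` on the free *-algebra. -/
def starP (p : FreeStarAlg g) : FreeStarAlg g :=
  MonoidAlgebra.ofCoeff (Finsupp.mapDomain starWord p.coeff)

/-- The monomial corresponding to a word. -/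
def mono (w : FreeMonoid (Fin g ⊕ Fin g)) : FreeStarAlg g :=
  MonoidAlgebra.single w 1

/-- Degree of a noncommutative polynomial. -/
def deg (p : FreeStarAlg g) : ℕ :=
  p.coeff.support.sup fun w => (FreeMonoid.toList w).length

/-- `p` is homogeneous of degree `d`: every word appearing in `p` has length `d`. -/
def IsHom (d : ℕ) (p : FreeStarAlg g) : Prop :=
  ∀ w ∈ p.coeff.support, (FreeMonoid.toList w).length = d

/-- `p` is a (finite) sum of hermitian squares `qᵢ* qᵢ`. -/
def IsSOS (p : FreeStarAlg g) : Prop :=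
  ∃ (k : ℕ) (q : Fin k → FreeStarAlg g), p = ∑ i, starP (q i) * q i

/-- Membership in `I + I*`. -/
def MemIplusIstar (I : Submodule (FreeStarAlg g) (FreeStarAlg g)) (p : FreeStarAlg g) : Prop :=
  ∃ u ∈ I, ∃ v ∈ I, p = u + starP v

/-- A left ideal `I` is real if `∑ aᵢ* aᵢ ∈ I + I*` forces every `aᵢ ∈ I`. -/
def IsRealIdeal (I : Submodule (FreeStarAlg g) (FreeStarAlg g)) : Prop :=
  ∀ (r : ℕ) (a : Fin r → FreeStarAlg g),
    MemIplusIstar I (∑ i, starP (a i) * a i) → ∀ i, a i ∈ I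

/-- The left ideal generated by a set `S`. -/
def leftIdealGen (S : Set (FreeStarAlg g)) : Submodule (FreeStarAlg g) (FreeStarAlg g) :=
  Submodule.span (FreeStarAlg g) S

/-- `p` is irreducible: it cannot be written as a product of two polynomials of
strictly smaller degree. -/
def Irred (p : FreeStarAlg g) : Prop :=
  ¬ ∃ q r : FreeStarAlg g, p = q * r ∧ deg q < deg p ∧ deg r < deg p

/-- `p` is analytic: it contains no starred variables. -/
def IsAnalytic (p : FreeStarAlg g) : Prop :=
  ∀ w ∈ p.coeff.support, ∀ l ∈ FreeMonoid.toList w, l.isLeft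

end FreeStarAlg

/-!
Write `s = ∑ tᵢ* tᵢ`. Since constants are central, `q₂* p + p* q₂ = 2 q₂* s q₂`, which is the
sum of hermitian squares `∑ (√2 tᵢ q₂)* (√2 tᵢ q₂)` and lies in `I + I*` for `I = (p)`.
Degrees add in the free algebra, so every nonzero element of `I` has degree at least
`deg p = deg (s + q₁) + deg q₂`. But leading words of hermitian squares cannot cancel, so
`2 deg tᵢ ≤ deg s`, and `deg s ≤ deg (s + q₁)` because `s` is the hermitian part of `s + q₁`;
hence `deg (tᵢ q₂) < deg p` and the nonzero `√2 tᵢ q₂` is not in `I`.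
-/

namespace FreeStarAlg

variable {g : ℕ}

section Words

lemma starWord_mul (u v : FreeMonoid (Fin g ⊕ Fin g)) :
    starWord (u * v) = starWord v * starWord u := by
  simp [starWord, FreeMonoid.toList_mul]

lemma starWord_starWord (w : FreeMonoid (Fin g ⊕ Fin g)) : starWord (starWord w) = w := by
  simp [starWord, List.map_reverse, List.map_map]

lemma starWord_injective : Function.Injective (starWord (g := g)) :=
  Function.LeftInverse.injective starWord_starWord

lemma length_starWord (w : FreeMonoid (Fin g ⊕ Fin g)) :
    (starWord w).toList.length = w.toList.length := by
  simp [starWord]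

end Words

section Involution

lemma starP_add (a b : FreeStarAlg g) : starP (a + b) = starP a + starP b := by
  simp only [starP, MonoidAlgebra.coeff_add, Finsupp.mapDomain_add, MonoidAlgebra.ofCoeff_add]

lemma starP_smul (r : ℝ) (a : FreeStarAlg g) : starP (r • a) = r • starP a := by
  simp only [starP, MonoidAlgebra.coeff_smul, Finsupp.mapDomain_smul, MonoidAlgebra.ofCoeff_smul]

def starLinearMap : FreeStarAlg g →ₗ[ℝ] FreeStarAlg g where
  toFun := starP
  map_add' := starP_add
  map_smul' := starP_smul

lemma starP_zero : starP (0 : FreeStarAlg g) = 0 :=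
  map_zero starLinearMap

lemma starP_sum {ι : Type*} (s : Finset ι) (f : ι → FreeStarAlg g) :
    starP (∑ i ∈ s, f i) = ∑ i ∈ s, starP (f i) :=
  map_sum starLinearMap f s

lemma starP_single (w : FreeMonoid (Fin g ⊕ Fin g)) (r : ℝ) :
    starP (MonoidAlgebra.single w r) = MonoidAlgebra.single (starWord w) r := by
  rw [starP, MonoidAlgebra.coeff_single, Finsupp.mapDomain_single, MonoidAlgebra.ofCoeff_single]

lemma starP_algebraMap (c : ℝ) :
    starP (algebraMap ℝ (FreeStarAlg g) c) = algebraMap ℝ (FreeStarAlg g) c :=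
  starP_single 1 c

lemma starP_mul (a b : FreeStarAlg g) : starP (a * b) = starP b * starP a := by
  induction a using MonoidAlgebra.induction_linear with
  | zero => rw [zero_mul, starP_zero, mul_zero]
  | add f h hf hh => rw [add_mul, starP_add, hf, hh, starP_add, mul_add]
  | single u r =>
    induction b using MonoidAlgebra.induction_linear with
    | zero => rw [mul_zero, starP_zero, zero_mul]
    | add f h hf hh => rw [mul_add, starP_add, hf, hh, starP_add, add_mul]
    | single v t =>
      rw [MonoidAlgebra.single_mul_single, starP_single, starP_single, starP_single,
        MonoidAlgebra.single_mul_single, starWord_mul, mul_comm]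

lemma starP_starP (a : FreeStarAlg g) : starP (starP a) = a := by
  rw [starP, starP, MonoidAlgebra.coeff_ofCoeff, ← Finsupp.mapDomain_comp,
    Function.LeftInverse.comp_eq_id starWord_starWord, Finsupp.mapDomain_id,
    MonoidAlgebra.ofCoeff_coeff]

lemma coeff_starP_starWord (a : FreeStarAlg g) (w : FreeMonoid (Fin g ⊕ Fin g)) :
    (starP a).coeff (starWord w) = a.coeff w := by
  rw [starP, MonoidAlgebra.coeff_ofCoeff]
  exact Finsupp.mapDomain_apply starWord_injective a.coeff w

lemma IsSOS.starP_eq {s : FreeStarAlg g} (hs : IsSOS s) : starP s = s := by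
  obtain ⟨k, t, rfl⟩ := hs
  simp only [starP_sum, starP_mul, starP_starP]

end Involution

section Degree

lemma length_le_deg {p : FreeStarAlg g} {w : FreeMonoid (Fin g ⊕ Fin g)}
    (hw : w ∈ p.coeff.support) : w.toList.length ≤ deg p :=
  Finset.le_sup (f := fun w => w.toList.length) hw

lemma deg_le {p : FreeStarAlg g} {n : ℕ} (h : ∀ w ∈ p.coeff.support, w.toList.length ≤ n) :
    deg p ≤ n :=
  Finset.sup_le h

lemma deg_zero : deg (0 : FreeStarAlg g) = 0 := rfl

lemma exists_length_eq_deg {p : FreeStarAlg g} (hp : p ≠ 0) :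
    ∃ w ∈ p.coeff.support, w.toList.length = deg p := by
  obtain ⟨w, hw, h⟩ := Finset.exists_mem_eq_sup p.coeff.support
    (Finsupp.support_nonempty_iff.mpr (MonoidAlgebra.coeff_eq_zero.not.mpr hp))
    (fun w => w.toList.length)
  exact ⟨w, hw, h.symm⟩

lemma deg_add_le (a b : FreeStarAlg g) : deg (a + b) ≤ max (deg a) (deg b) := by
  classical
  rw [deg, MonoidAlgebra.coeff_add]
  exact (Finset.sup_mono Finsupp.support_add).trans_eq Finset.sup_union

lemma deg_neg (a : FreeStarAlg g) : deg (-a) = deg a := by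
  rw [deg, deg, MonoidAlgebra.coeff_neg, Finsupp.support_neg]

lemma deg_sub_le (a b : FreeStarAlg g) : deg (a - b) ≤ max (deg a) (deg b) := by
  simpa only [sub_eq_add_neg, deg_neg] using deg_add_le a (-b)

lemma deg_smul {r : ℝ} (hr : r ≠ 0) (a : FreeStarAlg g) : deg (r • a) = deg a := by
  rw [deg, deg, MonoidAlgebra.coeff_smul, Finsupp.support_smul_eq hr]

lemma deg_algebraMap (c : ℝ) : deg (algebraMap ℝ (FreeStarAlg g) c) = 0 := by
  refine Nat.eq_zero_of_le_zero (deg_le fun w hw => ?_)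
  rw [Finset.mem_singleton.mp (Finsupp.support_single_subset hw)]
  rfl

lemma deg_add_algebraMap (x : FreeStarAlg g) (c : ℝ) :
    deg (x + algebraMap ℝ (FreeStarAlg g) c) = deg x := by
  refine le_antisymm ?_ ?_
  · simpa only [deg_algebraMap, Nat.max_zero] using deg_add_le x (algebraMap ℝ (FreeStarAlg g) c)
  · simpa only [add_sub_cancel_right, deg_algebraMap, Nat.max_zero] using
      deg_sub_le (x + algebraMap ℝ (FreeStarAlg g) c) (algebraMap ℝ (FreeStarAlg g) c)

lemma deg_starP (a : FreeStarAlg g) : deg (starP a) = deg a := by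
  classical
  rw [deg, deg, starP, MonoidAlgebra.coeff_ofCoeff,
    Finsupp.mapDomain_support_of_injective starWord_injective, Finset.sup_image]
  exact Finset.sup_congr rfl fun w _ => length_starWord w

lemma deg_le_deg_add_of_starP_eq {s q : FreeStarAlg g} (hs : starP s = s) (hq : starP q = -q) :
    deg s ≤ deg (s + q) := by
  have h2s : (2 : ℝ) • s = (s + q) + starP (s + q) := by
    rw [starP_add, hs, hq, two_smul]; abel
  calc deg s = deg ((2 : ℝ) • s) := (deg_smul two_ne_zero s).symm
    _ ≤ max (deg (s + q)) (deg (starP (s + q))) := h2s ▸ deg_add_le _ _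
    _ = deg (s + q) := by rw [deg_starP, max_self]

lemma deg_mul_le (a b : FreeStarAlg g) : deg (a * b) ≤ deg a + deg b := by
  classical
  refine deg_le fun w hw => ?_
  obtain ⟨u, hu, v, hv, rfl⟩ := Finset.mem_mul.mp (MonoidAlgebra.support_coeff_mul_subset a b hw)
  rw [FreeMonoid.toList_mul, List.length_append]
  exact add_le_add (length_le_deg hu) (length_le_deg hv)

lemma uniqueMul_of_deg_le {a b : FreeStarAlg g} {u v : FreeMonoid (Fin g ⊕ Fin g)}
    (hu : deg a ≤ u.toList.length) (hv : deg b ≤ v.toList.length) :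
    UniqueMul a.coeff.support b.coeff.support u v := by
  intro x y hx hy hxy
  have hlist : x.toList ++ y.toList = u.toList ++ v.toList := by
    simpa only [FreeMonoid.toList_mul] using congrArg FreeMonoid.toList hxy
  have hlen := congrArg List.length hlist
  rw [List.length_append, List.length_append] at hlen
  have hx' := (length_le_deg hx).trans hu
  have hy' := (length_le_deg hy).trans hv
  obtain ⟨hxu, hyv⟩ := List.append_inj hlist (by omega)
  exact ⟨FreeMonoid.toList.injective hxu, FreeMonoid.toList.injective hyv⟩

lemma coeff_mul_of_deg_le {a b : FreeStarAlg g} {u v : FreeMonoid (Fin g ⊕ Fin g)}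
    (hu : deg a ≤ u.toList.length) (hv : deg b ≤ v.toList.length) :
    (a * b).coeff (u * v) = a.coeff u * b.coeff v :=
  MonoidAlgebra.coeff_mul_mul_of_uniqueMul (uniqueMul_of_deg_le hu hv)

lemma deg_mul {a b : FreeStarAlg g} (ha : a ≠ 0) (hb : b ≠ 0) :
    deg (a * b) = deg a + deg b := by
  obtain ⟨u, hu, hua⟩ := exists_length_eq_deg ha
  obtain ⟨v, hv, hvb⟩ := exists_length_eq_deg hb
  refine le_antisymm (deg_mul_le a b) ?_
  have huv : u * v ∈ (a * b).coeff.support := by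
    rw [Finsupp.mem_support_iff, coeff_mul_of_deg_le hua.ge hvb.ge]
    exact mul_ne_zero (Finsupp.mem_support_iff.mp hu) (Finsupp.mem_support_iff.mp hv)
  simpa only [FreeMonoid.toList_mul, List.length_append, hua, hvb] using length_le_deg huv

lemma coeff_starP_mul_self_starWord_mul {t : FreeStarAlg g} {w : FreeMonoid (Fin g ⊕ Fin g)}
    (hw : deg t ≤ w.toList.length) :
    (starP t * t).coeff (starWord w * w) = t.coeff w ^ 2 := by
  rw [coeff_mul_of_deg_le (by rwa [deg_starP, length_starWord]) hw, coeff_starP_starWord, sq]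

/-- The leading words of hermitian squares cannot cancel: at `w* w`, for `w` a word of maximal
length, the coefficient of `∑ tⱼ* tⱼ` is `∑ tⱼ(w)²`. -/
lemma two_mul_deg_le_deg_sum_starP_mul_self {k : ℕ} (t : Fin k → FreeStarAlg g) (i : Fin k) :
    2 * deg (t i) ≤ deg (∑ j, starP (t j) * t j) := by
  obtain ⟨j, -, hj⟩ :=
    Finset.exists_max_image Finset.univ (fun j => deg (t j)) ⟨i, Finset.mem_univ i⟩
  have hij := hj i (Finset.mem_univ i)
  rcases eq_or_ne (t j) 0 with htj | htj
  · rw [htj, deg_zero] at hij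
    omega
  obtain ⟨w, hw, hwj⟩ := exists_length_eq_deg htj
  have hcoeff : (∑ l, starP (t l) * t l).coeff (starWord w * w) = ∑ l, (t l).coeff w ^ 2 := by
    rw [MonoidAlgebra.coeff_sum, Finsupp.finsetSum_apply]
    exact Finset.sum_congr rfl fun l _ =>
      coeff_starP_mul_self_starWord_mul (hwj ▸ hj l (Finset.mem_univ l))
  have hpos : 0 < ∑ l, (t l).coeff w ^ 2 :=
    Finset.sum_pos' (fun _ _ => sq_nonneg _)
      ⟨j, Finset.mem_univ j, pow_two_pos_of_ne_zero (Finsupp.mem_support_iff.mp hw)⟩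
  have hlen := length_le_deg (Finsupp.mem_support_iff.mpr (hcoeff ▸ hpos.ne'))
  rw [FreeMonoid.toList_mul, List.length_append, length_starWord] at hlen
  omega

end Degree

section LeftIdeal

lemma deg_le_of_mem_leftIdealGen_singleton {p a : FreeStarAlg g} (ha : a ∈ leftIdealGen {p})
    (ha0 : a ≠ 0) : deg p ≤ deg a := by
  obtain ⟨r, rfl⟩ := Submodule.mem_span_singleton.mp ha
  rw [smul_eq_mul] at ha0 ⊢
  rw [deg_mul (left_ne_zero_of_mul ha0) (right_ne_zero_of_mul ha0)]
  exact Nat.le_add_left _ _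

lemma not_isRealIdeal_leftIdealGen_singleton {p : FreeStarAlg g} {r : ℕ}
    (a : Fin r → FreeStarAlg g) (hmem : MemIplusIstar (leftIdealGen {p}) (∑ i, starP (a i) * a i))
    {i : Fin r} (hai : a i ≠ 0) (hdeg : deg (a i) < deg p) :
    ¬ IsRealIdeal (leftIdealGen {p}) := fun hreal =>
  (deg_le_of_mem_leftIdealGen_singleton (hreal r a hmem i) hai).not_gt hdeg

lemma memIplusIstar_starP_mul_add_starP_mul (p q : FreeStarAlg g) :
    MemIplusIstar (leftIdealGen {p}) (starP q * p + starP p * q) :=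
  have hmem : starP q * p ∈ leftIdealGen {p} :=
    Submodule.smul_mem _ _ (Submodule.mem_span_singleton_self p)
  ⟨_, hmem, _, hmem, by rw [starP_mul, starP_starP]⟩

end LeftIdeal

/-- The constant term of `p` drops out because constants are central. -/
lemma starP_mul_add_starP_mul_eq {s q1 q2 p : FreeStarAlg g} {c : ℝ} (hs : starP s = s)
    (hq1 : starP q1 = -q1) (hq2 : starP q2 = -q2)
    (hp : p = (s + q1) * q2 + algebraMap ℝ (FreeStarAlg g) c) :
    starP q2 * p + starP p * q2 = 2 * (starP q2 * s * q2) := by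
  rw [hp, starP_add, starP_mul, starP_add, starP_algebraMap, hs, hq1, hq2,
    add_mul _ (algebraMap _ _ c), Algebra.commutes c q2]
  noncomm_ring

lemma sum_starP_mul_self_sqrt_two_smul {k : ℕ} (t : Fin k → FreeStarAlg g) (q : FreeStarAlg g) :
    ∑ i, starP (√2 • (t i * q)) * (√2 • (t i * q)) =
      2 * (starP q * (∑ i, starP (t i) * t i) * q) := by
  have h2 : √2 * √2 = 2 := Real.mul_self_sqrt zero_le_two
  simp only [starP_smul, smul_mul_smul_comm, h2, starP_mul, Finset.mul_sum, Finset.sum_mul,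
    two_smul, two_mul, mul_assoc]

end FreeStarAlg

open FreeStarAlg

/-- If `p = (s + q₁) q₂ + c` with `q₁, q₂` antisymmetric, `q₂ ≠ 0`,
`s` a nonzero sum of squares, `c` constant and `deg (s + q₁) > 0`, then the left
ideal generated by `p` is not real; indeed `q₂* p + p* q₂ = 2 q₂* s q₂` is a
nonzero sum of squares in `I + I*`, and `deg q₂ < deg p`. -/
theorem stmt12 {g : ℕ} (s q1 q2 p : FreeStarAlg g) (c : ℝ)
    (hq1 : starP q1 = -q1) (hq2 : starP q2 = -q2) (hq2ne : q2 ≠ 0)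
    (hs : IsSOS s) (hs0 : s ≠ 0) (hdeg : 0 < deg (s + q1))
    (hp : p = (s + q1) * q2 + algebraMap ℝ (FreeStarAlg g) c) :
    ¬ IsRealIdeal (leftIdealGen {p}) ∧
      starP q2 * p + starP p * q2 = 2 * (starP q2 * s * q2) ∧
      IsSOS (starP q2 * p + starP p * q2) ∧
      starP q2 * p + starP p * q2 ≠ 0 ∧
      MemIplusIstar (leftIdealGen {p}) (starP q2 * p + starP p * q2) ∧
      deg q2 < deg p := by
  have hid := starP_mul_add_starP_mul_eq hs.starP_eq hq1 hq2 hp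
  have hdeg_s := deg_le_deg_add_of_starP_eq hs.starP_eq hq1
  obtain ⟨k, t, hst⟩ := hs
  set a : Fin k → FreeStarAlg g := fun i => √2 • (t i * q2)
  have ha : ∑ i, starP (a i) * a i = starP q2 * p + starP p * q2 := by
    rw [hid, hst]
    exact sum_starP_mul_self_sqrt_two_smul t q2
  have hmem := memIplusIstar_starP_mul_add_starP_mul p q2
  have hsq1 : s + q1 ≠ 0 := ne_of_apply_ne deg (by rw [deg_zero]; exact hdeg.ne')
  have hdeg_p : deg p = deg (s + q1) + deg q2 := by
    rw [hp, deg_add_algebraMap, deg_mul hsq1 hq2ne]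
  obtain ⟨i, hti⟩ : ∃ i, t i ≠ 0 := by
    by_contra! h
    exact hs0 (by simp [hst, h])
  have hdeg_t : 2 * deg (t i) ≤ deg s := hst ▸ two_mul_deg_le_deg_sum_starP_mul_self t i
  have hai : a i ≠ 0 := smul_ne_zero (by positivity) (mul_ne_zero hti hq2ne)
  have hdeg_a : deg (a i) = deg (t i) + deg q2 := by
    rw [deg_smul (by positivity), deg_mul hti hq2ne]
  refine ⟨not_isRealIdeal_leftIdealGen_singleton a (ha ▸ hmem) hai (by omega), hid,
    ⟨k, a, ha.symm⟩, ?_, hmem, by omega⟩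
  rw [hid, two_mul, ← two_smul ℝ]
  exact smul_ne_zero two_ne_zero
    (mul_ne_zero (mul_ne_zero (hq2 ▸ neg_ne_zero.mpr hq2ne) hs0) hq2ne)
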